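/- Let S be an η-sparse family of dyadic cubes in ℝⁿ (i.e., for each Q ∈ S there is a measurable subset E_Q ⊆ Q with |E_Q| ≥ η|Q|, and the sets E_Q are pairwise disjoint). Let σ be a locally integrable nonnegative weight, let R ∈ S, let k ∈ ℤ, and let F_k = {Q ∈ S : 2^k < σ_Q ≤ 2^{k+1}}, where σ_Q = (1/|Q|)∫_Q σ. Then ∑_{Q ∈ F_k, Q ⊆ R} σ(Q) ≤ C σ(R), where σ(Q) = ∫_Q σ and C depends only on η (not on k, R, or σ). -/

import Mathlib

/-! For `Q` in the level set, `σ(Q) ≤ 2^(k+1) |Q| ≤ 2^(k+1) η⁻¹ |E_Q|`, and the disjoint sets `E_Q`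
lie in the union of the maximal cubes `P` of the level set. Dyadic cubes are nested or disjoint, so
these maximal cubes are pairwise disjoint, and `|P| < 2^(-k) σ(P)` gives
`∑ σ(Q) ≤ 2^(k+1) η⁻¹ 2^(-k) σ(⋃ P) ≤ 2 η⁻¹ σ(R)`. Restricting to finite subfamilies makes the
maximal cubes exist trivially. -/

open MeasureTheory Set
open scoped ENNReal

noncomputable section

def dyadicCube (n : ℕ) (k : ℤ) (m : Fin n → ℤ) : Set (Fin n → ℝ) :=
  {x | ∀ i, (m i : ℝ) * (2:ℝ) ^ k ≤ x i ∧ x i < ((m i : ℝ) + 1) * (2:ℝ) ^ k}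

def IsDyadicCube {n : ℕ} (Q : Set (Fin n → ℝ)) : Prop := ∃ k m, Q = dyadicCube n k m

def IsCube {n : ℕ} (Q : Set (Fin n → ℝ)) : Prop :=
  ∃ (a : Fin n → ℝ) (h : ℝ), 0 < h ∧ Q = {x | ∀ i, a i ≤ x i ∧ x i < a i + h}

def IsSparse {n : ℕ} (η : ℝ≥0∞) (S : Set (Set (Fin n → ℝ))) : Prop :=
  (∀ Q ∈ S, IsDyadicCube Q) ∧
  ∃ E : Set (Fin n → ℝ) → Set (Fin n → ℝ),
    (∀ Q ∈ S, E Q ⊆ Q ∧ MeasurableSet (E Q) ∧ η * volume Q ≤ volume (E Q)) ∧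
    S.PairwiseDisjoint E

def mass {n : ℕ} (w : (Fin n → ℝ) → ℝ≥0∞) (Q : Set (Fin n → ℝ)) : ℝ≥0∞ := ∫⁻ x in Q, w x

def avg {n : ℕ} (w : (Fin n → ℝ) → ℝ≥0∞) (Q : Set (Fin n → ℝ)) : ℝ≥0∞ := mass w Q / volume Q

def maximalOp {n : ℕ} (f : (Fin n → ℝ) → ℝ≥0∞) (x : Fin n → ℝ) : ℝ≥0∞ :=
  ⨆ (Q : Set (Fin n → ℝ)) (_ : IsCube Q) (_ : x ∈ Q), avg f Q

theorem mem_dyadicCube_iff {n : ℕ} {k : ℤ} {m : Fin n → ℤ} {x : Fin n → ℝ} :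
    x ∈ dyadicCube n k m ↔ ∀ i, ⌊x i / 2 ^ k⌋ = m i := by
  have h : (0:ℝ) < 2 ^ k := by positivity
  simp only [dyadicCube, mem_ofPred_eq, Int.floor_eq_iff, le_div_iff₀ h, div_lt_iff₀ h]

theorem dyadicCube_subset_of_le_of_mem {n : ℕ} {k k' : ℤ} (hk : k ≤ k') {m m' : Fin n → ℤ}
    {x : Fin n → ℝ} (hx : x ∈ dyadicCube n k m) (hx' : x ∈ dyadicCube n k' m') :
    dyadicCube n k m ⊆ dyadicCube n k' m' := by
  obtain ⟨d, rfl⟩ : ∃ d : ℕ, k' = k + d := ⟨(k' - k).toNat, by omega⟩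
  -- `⌊a / 2 ^ d⌋ = ⌊⌊a⌋ / 2 ^ d⌋`: the coarser index is a function of the finer one
  have floor_eq : ∀ y ∈ dyadicCube n k m, ∀ i, ⌊y i / 2 ^ (k + d)⌋ = m i / 2 ^ d := by
    intro y hy i
    rw [zpow_add₀ two_ne_zero, ← div_div, zpow_natCast, ← Nat.cast_ofNat, ← Nat.cast_pow,
      Int.floor_div_natCast, Nat.cast_ofNat, mem_dyadicCube_iff.1 hy i]
    push_cast
    rfl
  intro y hy
  rw [mem_dyadicCube_iff]
  intro i
  rw [floor_eq y hy, ← floor_eq x hx, mem_dyadicCube_iff.1 hx' i]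

theorem IsDyadicCube.subset_or_subset_or_disjoint {n : ℕ} {Q Q' : Set (Fin n → ℝ)}
    (hQ : IsDyadicCube Q) (hQ' : IsDyadicCube Q') : Q ⊆ Q' ∨ Q' ⊆ Q ∨ Disjoint Q Q' := by
  obtain ⟨k, m, rfl⟩ := hQ
  obtain ⟨k', m', rfl⟩ := hQ'
  rcases (dyadicCube n k m ∩ dyadicCube n k' m').eq_empty_or_nonempty with h | ⟨x, hx, hx'⟩
  · exact .inr (.inr (disjoint_iff_inter_eq_empty.2 h))
  rcases le_total k k' with hk | hk
  · exact .inl (dyadicCube_subset_of_le_of_mem hk hx hx')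
  · exact .inr (.inl (dyadicCube_subset_of_le_of_mem hk hx' hx))

theorem dyadicCube_eq_pi (n : ℕ) (k : ℤ) (m : Fin n → ℤ) :
    dyadicCube n k m = univ.pi fun i => Ico ((m i : ℝ) * 2 ^ k) ((m i + 1) * 2 ^ k) := by
  ext x
  simp [dyadicCube]

theorem IsDyadicCube.measurableSet {n : ℕ} {Q : Set (Fin n → ℝ)} (hQ : IsDyadicCube Q) :
    MeasurableSet Q := by
  obtain ⟨k, m, rfl⟩ := hQ
  rw [dyadicCube_eq_pi]
  exact .univ_pi fun _ => measurableSet_Ico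

theorem volume_dyadicCube (n : ℕ) (k : ℤ) (m : Fin n → ℤ) :
    volume (dyadicCube n k m) = ENNReal.ofReal (2 ^ k) ^ n := by
  simp [dyadicCube_eq_pi, volume_pi_pi, Real.volume_Ico, ← sub_mul]

theorem IsDyadicCube.volume_ne_zero {n : ℕ} {Q : Set (Fin n → ℝ)} (hQ : IsDyadicCube Q) :
    volume Q ≠ 0 := by
  obtain ⟨k, m, rfl⟩ := hQ
  rw [volume_dyadicCube]
  positivity

theorem IsDyadicCube.volume_ne_top {n : ℕ} {Q : Set (Fin n → ℝ)} (hQ : IsDyadicCube Q) :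
    volume Q ≠ ∞ := by
  obtain ⟨k, m, rfl⟩ := hQ
  rw [volume_dyadicCube]
  exact ENNReal.pow_ne_top ENNReal.ofReal_ne_top

theorem measure_biUnion_le_mul_of_laminar {α : Type*} [MeasurableSpace α] {μ ν : Measure α}
    {c : ℝ≥0∞} {G : Finset (Set α)} (hG : ∀ A ∈ G, ∀ B ∈ G, A ⊆ B ∨ B ⊆ A ∨ Disjoint A B)
    (hmeas : ∀ A ∈ G, MeasurableSet A) (hc : ∀ A ∈ G, μ A ≤ c * ν A) :
    μ (⋃ A ∈ G, A) ≤ c * ν (⋃ A ∈ G, A) := by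
  classical
  set M := G.filter (Maximal (· ∈ G))
  have hMG : ∀ P ∈ M, P ∈ G := fun P hP => (Finset.mem_filter.1 hP).1
  have hunion : (⋃ A ∈ G, A) = ⋃ P ∈ M, P := by
    refine subset_antisymm (iUnion₂_subset fun A hA => ?_) (biUnion_subset_biUnion_left hMG)
    obtain ⟨P, hAP, hP⟩ := G.exists_le_maximal hA
    exact hAP.trans (subset_biUnion_of_mem (u := id) (Finset.mem_filter.2 ⟨hP.1, hP⟩))
  have hdisj : (M : Set (Set α)).PairwiseDisjoint id := by
    intro P hP P' hP' hne
    have hmax := (Finset.mem_filter.1 hP).2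
    have hmax' := (Finset.mem_filter.1 hP').2
    rcases hG P (hMG P hP) P' (hMG P' hP') with h | h | h
    · exact absurd (hmax.eq_of_le hmax'.1 h) hne
    · exact absurd (hmax'.eq_of_le hmax.1 h).symm hne
    · exact h
  calc μ (⋃ A ∈ G, A) = μ (⋃ P ∈ M, P) := by rw [hunion]
    _ ≤ ∑ P ∈ M, μ P := measure_biUnion_finset_le M id
    _ ≤ ∑ P ∈ M, c * ν P := Finset.sum_le_sum fun P hP => hc P (hMG P hP)
    _ = c * ν (⋃ A ∈ G, A) := by
      rw [← Finset.mul_sum, hunion]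
      exact congrArg _ (measure_biUnion_finset hdisj fun P hP => hmeas P (hMG P hP)).symm

theorem IsSparse.sum_volume_le {n : ℕ} {η : ℝ≥0∞} {S : Set (Set (Fin n → ℝ))}
    (hS : IsSparse η S) (hη0 : η ≠ 0) (hη : η ≠ ∞) {G : Finset (Set (Fin n → ℝ))}
    (hG : ∀ Q ∈ G, Q ∈ S) : ∑ Q ∈ G, volume Q ≤ η⁻¹ * volume (⋃ Q ∈ G, Q) := by
  obtain ⟨-, E, hE, hdisj⟩ := hS
  calc ∑ Q ∈ G, volume Q ≤ ∑ Q ∈ G, η⁻¹ * volume (E Q) := by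
        refine Finset.sum_le_sum fun Q hQ => ?_
        exact (ENNReal.mul_le_iff_le_inv hη0 hη).1 (hE Q (hG Q hQ)).2.2
    _ = η⁻¹ * volume (⋃ Q ∈ G, E Q) := by
        rw [← Finset.mul_sum, measure_biUnion_finset (hdisj.subset hG)
          fun Q hQ => (hE Q (hG Q hQ)).2.1]
    _ ≤ η⁻¹ * volume (⋃ Q ∈ G, Q) := by
        gcongr with Q hQ
        exact (hE Q (hG Q hQ)).1

theorem mass_eq_withDensity {n : ℕ} (σ : (Fin n → ℝ) → ℝ≥0∞) (Q : Set (Fin n → ℝ)) :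
    mass σ Q = volume.withDensity σ Q :=
  (withDensity_apply' σ Q).symm

theorem IsSparse.sum_mass_le {n : ℕ} {η : ℝ≥0∞} {S : Set (Set (Fin n → ℝ))}
    (hS : IsSparse η S) (hη0 : η ≠ 0) (hη : η ≠ ∞) (σ : (Fin n → ℝ) → ℝ≥0∞)
    (R : Set (Fin n → ℝ)) {t s : ℝ≥0∞} (ht : t ≠ 0) {G : Finset (Set (Fin n → ℝ))}
    (hG : ∀ Q ∈ G, Q ∈ S ∧ Q ⊆ R ∧ t < avg σ Q ∧ avg σ Q ≤ s) :
    ∑ Q ∈ G, mass σ Q ≤ s / t * η⁻¹ * mass σ R := by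
  set ν := volume.withDensity σ
  have hdy : ∀ Q ∈ G, IsDyadicCube Q := fun Q hQ => hS.1 Q (hG Q hQ).1
  have hmass_le : ∀ Q ∈ G, mass σ Q ≤ s * volume Q := fun Q hQ =>
    (ENNReal.div_le_iff_le_mul (.inl (hdy Q hQ).volume_ne_zero)
      (.inl (hdy Q hQ).volume_ne_top)).1 (hG Q hQ).2.2.2
  have hvolume_le : ∀ Q ∈ G, volume Q ≤ t⁻¹ * ν Q := fun Q hQ => by
    have hlt := (ENNReal.lt_div_iff_mul_lt (.inl (hdy Q hQ).volume_ne_zero)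
      (.inl (hdy Q hQ).volume_ne_top)).1 (hG Q hQ).2.2.1
    rw [← mass_eq_withDensity, ← ENNReal.mul_le_iff_le_inv ht (hG Q hQ).2.2.1.ne_top]
    exact hlt.le
  calc ∑ Q ∈ G, mass σ Q ≤ s * ∑ Q ∈ G, volume Q := by
        rw [Finset.mul_sum]
        exact Finset.sum_le_sum hmass_le
    _ ≤ s * (η⁻¹ * volume (⋃ Q ∈ G, Q)) := by
        gcongr
        exact hS.sum_volume_le hη0 hη fun Q hQ => (hG Q hQ).1
    _ ≤ s * (η⁻¹ * (t⁻¹ * ν (⋃ Q ∈ G, Q))) := by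
        gcongr
        exact measure_biUnion_le_mul_of_laminar
          (fun A hA B hB => (hdy A hA).subset_or_subset_or_disjoint (hdy B hB))
          (fun Q hQ => (hdy Q hQ).measurableSet) hvolume_le
    _ ≤ s * (η⁻¹ * (t⁻¹ * ν R)) := by
        gcongr
        exact iUnion₂_subset fun Q hQ => (hG Q hQ).2.1
    _ = s / t * η⁻¹ * mass σ R := by
        rw [mass_eq_withDensity, div_eq_mul_inv]
        ring

theorem statement0 (eta : ℝ≥0∞) (heta0 : 0 < eta) (heta1 : eta ≤ 1) :
    ∃ C : ℝ≥0∞, C < ∞ ∧ ∀ (n : ℕ) (σ : (Fin n → ℝ) → ℝ≥0∞), Measurable σ →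
      ∀ (S : Set (Set (Fin n → ℝ))), IsSparse eta S → ∀ R ∈ S, ∀ k : ℤ,
      ∑' Q : {Q : Set (Fin n → ℝ) // Q ∈ S ∧ Q ⊆ R ∧
          (2:ℝ≥0∞) ^ (k:ℝ) < avg σ Q ∧ avg σ Q ≤ (2:ℝ≥0∞) ^ ((k:ℝ)+1)},
        mass σ Q.1 ≤ C * mass σ R := by
  refine ⟨2 * eta⁻¹, ENNReal.mul_lt_top ENNReal.ofNat_lt_top (ENNReal.inv_lt_top.2 heta0), ?_⟩
  intro n σ _ S hS R _ k
  have hpow0 : (2:ℝ≥0∞) ^ (k:ℝ) ≠ 0 := by positivity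
  have hpow_top : (2:ℝ≥0∞) ^ (k:ℝ) ≠ ∞ :=
    ENNReal.rpow_ne_top_of_ne_zero two_ne_zero ENNReal.ofNat_ne_top
  have hratio : (2:ℝ≥0∞) ^ ((k:ℝ) + 1) / 2 ^ (k:ℝ) = 2 := by
    rw [ENNReal.rpow_add _ _ two_ne_zero ENNReal.ofNat_ne_top, ENNReal.rpow_one,
      mul_comm, ENNReal.mul_div_cancel_right hpow0 hpow_top]
  rw [ENNReal.tsum_eq_iSup_sum]
  refine iSup_le fun G => ?_
  have hsum := hS.sum_mass_le heta0.ne' (heta1.trans_lt ENNReal.one_lt_top).ne σ R hpow0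
    (G := G.map (.subtype _)) fun Q hQ => by
      obtain ⟨Q, -, rfl⟩ := Finset.mem_map.1 hQ
      exact Q.2
  rwa [Finset.sum_map, hratio] at hsum
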